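/- Let w₁ and w₂ be primitive, unbordered, non-equivalent strings, let x₁ be a prefix of w₁^∞ and x₂ a prefix of w₂^∞. If |w₁| ≤ k·|w₂| for a positive integer k, then the overlap of x₁ and x₂ has length strictly less than k·|w₂|. In particular if |w₁| ≤ |w₂| then |ov(x₁,x₂)| < |w₂|. -/

import Mathlib

def Primitive {α : Type*} (w : List α) : Prop :=
  ∀ (v : List α) (k : ℕ), 2 ≤ k → w ≠ (List.replicate k v).flatten

def Unbordered {α : Type*} (s : List α) : Prop :=
  ∀ b : List α, b ≠ [] → b ≠ s → b <+: s → ¬ b <:+ s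

def IsPrefixOfInfPow {α : Type*} (x w : List α) : Prop :=
  ∃ m : ℕ, x <+: (List.replicate m w).flatten

/-!
Suppose the overlap were at least `k·|w₂|` long. Then `w₂ᵏ` is a prefix of `w₂^∞` that also
occurs inside `w₁^∞`, hence is a prefix of `v^∞` for a rotation `v` of `w₁`. As `|v| ≤ |w₂ᵏ|`,
dropping the first `|v|` letters of `w₂ᵏ` leaves a border of `w₂ᵏ`; since `w₂` is unbordered,
borders of `w₂ᵏ` have length divisible by `|w₂|`, so `|w₂|` divides `|v|`. Then `v = w₂ᵗ`, and
primitivity of `v` forces `v = w₂`, contradicting non-equivalence.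
-/

open List

namespace List

variable {α : Type*}

theorem length_flatten_replicate (n : ℕ) (w : List α) :
    (replicate n w).flatten.length = n * w.length := by
  simp [length_flatten]

theorem flatten_replicate_isPrefix_of_le {m n : ℕ} (w : List α) (h : m ≤ n) :
    (replicate m w).flatten <+: (replicate n w).flatten := by
  obtain ⟨d, rfl⟩ := Nat.exists_eq_add_of_le h
  exact ⟨(replicate d w).flatten, by rw [replicate_add, flatten_append]⟩

theorem append_flatten_replicate_swap (u v : List α) (n : ℕ) :
    u ++ (replicate n (v ++ u)).flatten = (replicate n (u ++ v)).flatten ++ u := by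
  induction n with
  | zero => simp
  | succ n ih => simp [replicate_succ, ← ih]

theorem rotate_one_flatten_replicate (w : List α) (n : ℕ) :
    (replicate n w).flatten.rotate 1 = (replicate n (w.rotate 1)).flatten := by
  rcases w with _ | ⟨a, w⟩
  · simp
  rcases n with _ | n
  · simp
  have key := append_flatten_replicate_swap [a] w n
  simp only [replicate_succ, flatten_cons, cons_append, nil_append, rotate_cons_succ,
    rotate_zero] at key ⊢
  rw [append_assoc, ← key]
  simp

theorem rotate_flatten_replicate (w : List α) (n k : ℕ) :
    (replicate n w).flatten.rotate k = (replicate n (w.rotate k)).flatten := by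
  induction k with
  | zero => simp
  | succ k ih => rw [← rotate_rotate, ih, rotate_one_flatten_replicate, rotate_rotate]

theorem IsInfix.exists_isPrefix_flatten_replicate_rotate {s w : List α} {m : ℕ}
    (h : s <:+: (replicate m w).flatten) :
    ∃ k, s <+: (replicate m (w.rotate k)).flatten := by
  obtain ⟨a, b, hab⟩ := h
  refine ⟨a.length, b ++ a, ?_⟩
  rw [← rotate_flatten_replicate, ← hab, append_assoc, rotate_append_length_eq, append_assoc]

theorem flatten_replicate_isPrefix_of_isPrefix {x w : List α} {m k : ℕ}
    (h : x <+: (replicate m w).flatten) (hk : k * w.length ≤ x.length) :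
    (replicate k w).flatten <+: x := by
  obtain rfl | hw := eq_or_ne w []
  · simp
  have hkm : k ≤ m := by
    have := h.length_le
    rw [length_flatten_replicate] at this
    exact Nat.le_of_mul_le_mul_right (hk.trans this) (length_pos_iff.2 hw)
  exact prefix_of_prefix_length_le (flatten_replicate_isPrefix_of_le w hkm) h
    (by rwa [length_flatten_replicate])

theorem eq_flatten_replicate_of_isPrefix {v w : List α} {k t : ℕ}
    (h : v <+: (replicate k w).flatten) (ht : v.length = t * w.length) :
    v = (replicate t w).flatten :=
  ((flatten_replicate_isPrefix_of_isPrefix h ht.ge).eq_of_length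
    (by rw [length_flatten_replicate, ht])).symm

theorem drop_length_isPrefix_of_isPrefix_flatten_replicate {s v : List α} {n : ℕ}
    (h : s <+: (replicate n v).flatten) : s.drop v.length <+: s := by
  rcases n with _ | n
  · simp_all
  have hdrop : s.drop v.length <+: (replicate n v).flatten := by
    simpa [replicate_succ] using h.drop v.length
  exact prefix_of_prefix_length_le
    (hdrop.trans (flatten_replicate_isPrefix_of_le v n.le_succ)) h (by simp)

end List

section

variable {α : Type*} {w : List α}

theorem Primitive.ne_nil (h : Primitive w) : w ≠ [] := by
  rintro rfl
  exact h [] 2 le_rfl (by simp)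

theorem Primitive.rotate (h : Primitive w) (n : ℕ) : Primitive (w.rotate n) := by
  intro z t ht hz
  obtain ⟨j, hj⟩ := IsRotated.forall w n
  exact h (z.rotate j) t ht (by rw [← hj, hz, rotate_flatten_replicate])

theorem Primitive.eq_of_eq_flatten_replicate {z : List α} {t : ℕ} (h : Primitive w)
    (hw : w = (replicate t z).flatten) : w = z := by
  rcases t with _ | _ | t
  · exact absurd hw h.ne_nil
  · simpa using hw
  · exact absurd hw (h z (t + 2) (by omega))

theorem Unbordered.eq_nil_of_append_isPrefix {x z : List α} (hu : Unbordered w)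
    (h : x ++ w <+: w ++ z) (hx : x.length < w.length) : x = [] := by
  obtain ⟨c, hxc⟩ : x <+: w :=
    prefix_of_prefix_length_le ((prefix_append x w).trans h) (prefix_append w z) hx.le
  subst hxc
  -- `c` is then a nonempty border of `w = x ++ c`, proper unless `x = []`
  have hcz : x ++ c <+: c ++ z := by simpa [append_assoc] using h
  have hc : c <+: x ++ c :=
    prefix_of_prefix_length_le (prefix_append c z) hcz (by simp)
  by_contra hne
  refine hu c ?_ ?_ hc (suffix_append x c)
  · rintro rfl
    simp_all
  · intro hcx
    have := congrArg length hcx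
    simp only [length_append] at this
    exact hne (length_eq_zero_iff.1 (by omega))

theorem Unbordered.dvd_length_of_append_append_eq (hu : Unbordered w) {k : ℕ} {x y : List α}
    (h : x ++ w ++ y = (replicate k w).flatten) : w.length ∣ x.length := by
  induction k generalizing x with
  | zero => simp_all
  | succ k ih =>
    rw [replicate_succ, flatten_cons] at h
    rcases lt_or_ge x.length w.length with hlt | hge
    · rw [hu.eq_nil_of_append_isPrefix ⟨y, by rw [h]⟩ hlt]
      exact dvd_zero _
    · obtain ⟨x', rfl⟩ : w <+: x :=
        prefix_of_prefix_length_le (prefix_append w _) ⟨w ++ y, by rw [← append_assoc, h]⟩ hge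
      rw [length_append]
      exact (Nat.dvd_add_right (dvd_refl _)).2 (ih (by simpa [append_assoc] using h))

theorem Unbordered.dvd_length_of_isPrefix_of_isSuffix (hu : Unbordered w) {k : ℕ}
    {p : List α} (hp : p <+: (replicate k w).flatten) (hs : p <:+ (replicate k w).flatten) :
    w.length ∣ p.length := by
  rcases k with _ | k
  · simp_all
  rcases lt_or_ge p.length w.length with hlt | hge
  · have hpw : p <+: w :=
      prefix_of_prefix_length_le hp ⟨_, by rw [replicate_succ, flatten_cons]⟩ hlt.le
    have hsw : p <:+ w :=
      suffix_of_suffix_length_le hs ⟨_, by rw [replicate_succ', flatten_concat]⟩ hlt.le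
    by_contra hdvd
    refine hu p ?_ ?_ hpw hsw
    · rintro rfl
      simp at hdvd
    · rintro rfl
      exact lt_irrefl _ hlt
  · obtain ⟨x, hx⟩ := hs
    obtain ⟨y, rfl⟩ := prefix_of_prefix_length_le
      ⟨_, by rw [replicate_succ, flatten_cons]⟩ hp hge
    have hxw := hu.dvd_length_of_append_append_eq (by rw [append_assoc, hx])
    have hlen := congrArg length hx
    rw [length_append, length_flatten_replicate] at hlen
    exact (Nat.dvd_add_right hxw).1 (hlen ▸ dvd_mul_left _ _)

theorem Unbordered.dvd_length_of_flatten_replicate_isPrefix (hu : Unbordered w) {k n : ℕ}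
    {v : List α} (h : (replicate k w).flatten <+: (replicate n v).flatten)
    (hv : v.length ≤ k * w.length) : w.length ∣ v.length := by
  set s := (replicate k w).flatten
  have hborder : w.length ∣ (s.drop v.length).length :=
    hu.dvd_length_of_isPrefix_of_isSuffix (drop_length_isPrefix_of_isPrefix_flatten_replicate h)
      (drop_suffix _ _)
  have hs : s.length = k * w.length := length_flatten_replicate k w
  rw [length_drop, hs] at hborder
  have := Nat.dvd_sub (dvd_mul_left w.length k) hborder
  rwa [Nat.sub_sub_self hv] at this

end

theorem overlap_lt_k_mul_len_general {α : Type*} (w₁ w₂ x₁ x₂ ov : List α) (k : ℕ)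
    (hp₁ : Primitive w₁)
    (hu₂ : Unbordered w₂)
    (hne : ¬ w₁.IsRotated w₂)
    (hx₁ : IsPrefixOfInfPow x₁ w₁) (hx₂ : IsPrefixOfInfPow x₂ w₂)
    (hlen : w₁.length ≤ k * w₂.length)
    (hov₁ : ov <:+ x₁) (hov₂ : ov <+: x₂) :
    ov.length < k * w₂.length := by
  by_contra! hov
  obtain ⟨m₁, hm₁⟩ := hx₁
  obtain ⟨m₂, hm₂⟩ := hx₂
  have hS : (replicate k w₂).flatten <+: ov :=
    flatten_replicate_isPrefix_of_isPrefix (hov₂.trans hm₂) hov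
  obtain ⟨n, hSv⟩ := (hS.isInfix.trans (hov₁.isInfix.trans hm₁.isInfix)
    ).exists_isPrefix_flatten_replicate_rotate
  have hvlen : (w₁.rotate n).length = w₁.length := length_rotate w₁ n
  obtain ⟨t, ht⟩ := hu₂.dvd_length_of_flatten_replicate_isPrefix hSv (hvlen ▸ hlen)
  have hvS : w₁.rotate n <+: (replicate k w₂).flatten := by
    simpa using flatten_replicate_isPrefix_of_isPrefix (k := 1) hSv
      (by rw [one_mul, hvlen, length_flatten_replicate]; exact hlen)
  have hv := eq_flatten_replicate_of_isPrefix hvS (ht.trans (mul_comm _ _))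
  exact hne ⟨n, (hp₁.rotate n).eq_of_eq_flatten_replicate hv⟩

/-- If `w₁, w₂` are primitive, unbordered, non-equivalent, `xᵢ` a prefix of `wᵢ^∞`,
and `|w₁| ≤ k·|w₂|` for a positive integer `k`, then the overlap of `x₁` and `x₂`
has length `< k·|w₂|`; in particular `|w₁| ≤ |w₂|` gives `|ov(x₁,x₂)| < |w₂|`. -/
theorem overlap_lt_k_mul_len {α : Type*} (w₁ w₂ x₁ x₂ ov : List α) (k : ℕ)
    (hp₁ : Primitive w₁) (hp₂ : Primitive w₂)
    (hu₁ : Unbordered w₁) (hu₂ : Unbordered w₂)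
    (hne : ¬ w₁.IsRotated w₂)
    (hx₁ : IsPrefixOfInfPow x₁ w₁) (hx₂ : IsPrefixOfInfPow x₂ w₂)
    (hk : 0 < k) (hlen : w₁.length ≤ k * w₂.length)
    (hov₁ : ov <:+ x₁) (hov₂ : ov <+: x₂)
    (hovmax : ∀ u : List α, u <:+ x₁ → u <+: x₂ → u.length ≤ ov.length) :
    ov.length < k * w₂.length :=
  overlap_lt_k_mul_len_general w₁ w₂ x₁ x₂ ov k hp₁ hu₂ hne hx₁ hx₂ hlen hov₁ hov₂
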